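/- Let 𝒜 and ℬ be quasi-hereditary ℂ-linear categories with standard posets Δ_𝒜, Δ_ℬ, let E: 𝒜 → ℬ be a right exact functor with E(Δ_𝒜) ⊆ Δ_ℬ ∪ {0}, and let ♡: ℬ → ℬ_♡ be an exact functor such that Hom_ℬ(M, N) = 0 for every M ∈ Ker(♡) and every standardly filtered N ∈ ℬ^Δ. If ♡∘E is exact on the exact subcategory 𝒜^Δ of standardly filtered objects, then E restricts to an exact functor 𝒜^Δ → ℬ^Δ. -/

import Mathlib

/-!
The only point is that `E` sends the inclusion `Y ↪ X` of a step of a standard filtration to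
a monomorphism. Its kernel `K` is killed by `♡`, because `♡` is exact and `♡ ∘ E` is exact on
`𝒜^Δ`; and `K` sits inside `E Y`, which by induction on the length of the filtration is
standardly filtered, so the inclusion of `K` vanishes. Right exactness of `E` then identifies
the cokernel of `E Y ⟶ E X` with `E` of the standard subquotient, which is standard or zero.
-/

open CategoryTheory CategoryTheory.Limits

/-- `X` has a filtration of length `n` with subquotients in `Δ`. -/
def FiltN {C : Type*} [Category C] [Abelian C] (Δ : Set C) : ℕ → C → Prop
  | 0, X => IsZero X
  | n + 1, X => ∃ (Y : C) (f : Y ⟶ X), Mono f ∧ FiltN Δ n Y ∧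
      ∃ S ∈ Δ, Nonempty (cokernel f ≅ S)

/-- `X` is Δ-filtered: it has a finite filtration whose successive quotients
lie in `Δ`. -/
def StdFilt {C : Type*} [Category C] [Abelian C] (Δ : Set C) (X : C) : Prop :=
  ∃ n, FiltN Δ n X

section StdFilt

variable {C : Type*} [Category C] [Abelian C] {Δ : Set C}

theorem FiltN.of_iso {n : ℕ} {X X' : C} (h : FiltN Δ n X) (e : X ≅ X') : FiltN Δ n X' := by
  cases n with
  | zero => exact IsZero.of_iso h e.symm
  | succ n =>
    obtain ⟨Y, f, hf, hY, S, hS, ⟨i⟩⟩ := h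
    exact ⟨Y, f ≫ e.hom, inferInstance, hY, S, hS, ⟨cokernelCompIsIso f e.hom ≪≫ i⟩⟩

theorem StdFilt.of_iso {X X' : C} (h : StdFilt Δ X) (e : X ≅ X') : StdFilt Δ X' :=
  let ⟨n, hn⟩ := h
  ⟨n, hn.of_iso e⟩

theorem StdFilt.of_mono {Y X : C} (f : Y ⟶ X) [Mono f] (hY : StdFilt Δ Y) {S : C} (hS : S ∈ Δ)
    (e : cokernel f ≅ S) : StdFilt Δ X :=
  let ⟨n, hn⟩ := hY
  ⟨n + 1, Y, f, inferInstance, hn, S, hS, ⟨e⟩⟩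

open ZeroObject in
theorem StdFilt.of_mem {S : C} (hS : S ∈ Δ) : StdFilt Δ S :=
  StdFilt.of_mono (0 : 0 ⟶ S) ⟨0, isZero_zero C⟩ hS cokernelZeroIsoTarget

end StdFilt

section Functor

variable {A B D : Type*} [Category A] [Abelian A] [Category B] [Abelian B]
  [Category D] [Abelian D]

theorem mono_of_mono_map_of_hom_eq_zero (H : B ⥤ D) [PreservesFiniteLimits H] {X Y : B}
    (f : X ⟶ Y) [Mono (H.map f)] (h : ∀ (M : B) (g : M ⟶ X), IsZero (H.obj M) → g = 0) :
    Mono f :=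
  Abelian.mono_of_kernel_ι_eq_zero f <| h _ _ <|
    (isZero_zero D).of_iso (PreservesKernel.iso H f ≪≫ kernel.ofMono (H.map f))

theorem CategoryTheory.ShortComplex.ShortExact.map_of_mono_map_f {S : ShortComplex A}
    (hS : S.ShortExact) (E : A ⥤ B) [PreservesFiniteColimits E] [Mono (E.map S.f)] :
    (S.map E).ShortExact :=
  have := hS.epi_g
  { exact := ShortComplex.exact_of_g_is_cokernel _
      (CokernelCofork.mapIsColimit _ hS.gIsCokernel E)
    mono_f := ‹Mono (E.map S.f)›
    epi_g := inferInstanceAs (Epi (E.map S.g)) }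

theorem stdFilt_obj_of_mono_map {ΔA : Set A} {ΔB : Set B} (E : A ⥤ B)
    [PreservesFiniteColimits E] (hEΔ : ∀ S ∈ ΔA, E.obj S ∈ ΔB ∨ IsZero (E.obj S))
    (hmono : ∀ S : ShortComplex A, S.ShortExact →
      StdFilt ΔA S.X₁ → StdFilt ΔA S.X₂ → StdFilt ΔA S.X₃ →
      StdFilt ΔB (E.obj S.X₁) → Mono (E.map S.f))
    {X : A} (hX : StdFilt ΔA X) : StdFilt ΔB (E.obj X) := by
  obtain ⟨n, hn⟩ := hX
  induction n generalizing X with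
  | zero => exact ⟨0, E.map_isZero hn⟩
  | succ n ih =>
    obtain ⟨Y, f, hf, hY, T, hT, ⟨e⟩⟩ := hn
    have hEY : StdFilt ΔB (E.obj Y) := ih hY
    have : Mono (E.map f) :=
      hmono (ShortComplex.mk f (cokernel.π f) (cokernel.condition f))
        ⟨ShortComplex.exact_of_g_is_cokernel _ (cokernelIsCokernel f)⟩
        ⟨n, hY⟩ ⟨n + 1, Y, f, hf, hY, T, hT, ⟨e⟩⟩ ((StdFilt.of_mem hT).of_iso e.symm)
        hEY
    have ecok : cokernel (E.map f) ≅ E.obj T := (PreservesCokernel.iso E f).symm ≪≫ E.mapIso e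
    rcases hEΔ T hT with hET | hET
    · exact hEY.of_mono (E.map f) hET ecok
    · have := Preadditive.epi_of_isZero_cokernel _ (hET.of_iso ecok)
      have := isIso_of_mono_of_epi (E.map f)
      exact hEY.of_iso (asIso (E.map f))

end Functor

theorem stmt_19_general {A B BH : Type*}
    [Category A] [Abelian A]
    [Category B] [Abelian B]
    [Category BH] [Abelian BH]
    (ΔA : Set A) (ΔB : Set B)
    (E : A ⥤ B) [PreservesFiniteColimits E]
    (hEΔ : ∀ S ∈ ΔA, E.obj S ∈ ΔB ∨ IsZero (E.obj S))
    (H : B ⥤ BH) [PreservesFiniteLimits H]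
    (hker : ∀ (M : B) (N : B), IsZero (H.obj M) → StdFilt ΔB N →
      ∀ f : M ⟶ N, f = 0)
    (hHE : ∀ S : ShortComplex A, S.ShortExact →
      StdFilt ΔA S.X₁ → StdFilt ΔA S.X₂ → StdFilt ΔA S.X₃ →
      (S.map (E ⋙ H)).ShortExact) :
    (∀ X : A, StdFilt ΔA X → StdFilt ΔB (E.obj X)) ∧
    (∀ S : ShortComplex A, S.ShortExact →
      StdFilt ΔA S.X₁ → StdFilt ΔA S.X₂ → StdFilt ΔA S.X₃ →
      (S.map E).ShortExact) := by
  have hmono : ∀ S : ShortComplex A, S.ShortExact →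
      StdFilt ΔA S.X₁ → StdFilt ΔA S.X₂ → StdFilt ΔA S.X₃ →
      StdFilt ΔB (E.obj S.X₁) → Mono (E.map S.f) := fun S hS h₁ h₂ h₃ hE₁ =>
    have : Mono (H.map (E.map S.f)) := (hHE S hS h₁ h₂ h₃).mono_f
    mono_of_mono_map_of_hom_eq_zero H (E.map S.f) fun M g hM => hker M _ hM hE₁ g
  have hstd : ∀ X, StdFilt ΔA X → StdFilt ΔB (E.obj X) := fun _ =>
    stdFilt_obj_of_mono_map E hEΔ hmono
  refine ⟨hstd, fun S hS h₁ h₂ h₃ => ?_⟩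
  have := hmono S hS h₁ h₂ h₃ (hstd _ h₁)
  exact hS.map_of_mono_map_f E

/-- Lemma 7.9: let `E : 𝒜 → ℬ` be a right exact functor of quasi-hereditary
`ℂ`-linear (abelian) categories with `E(Δ_𝒜) ⊆ Δ_ℬ ∪ {0}`, and let
`♡ : ℬ → ℬ_♡` be an exact functor with `Hom_ℬ(M, N) = 0` for all
`M ∈ Ker(♡)` and all standardly filtered `N`.  If `♡ ∘ E` is exact on `𝒜^Δ`,
then `E` restricts to an exact functor `𝒜^Δ → ℬ^Δ`. -/
theorem stmt_19 {A B BH : Type*}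
    [Category A] [Abelian A] [Linear ℂ A]
    [Category B] [Abelian B] [Linear ℂ B]
    [Category BH] [Abelian BH] [Linear ℂ BH]
    (ΔA : Set A) (ΔB : Set B)
    (E : A ⥤ B) [E.Additive] [PreservesFiniteColimits E]
    (hEΔ : ∀ S ∈ ΔA, E.obj S ∈ ΔB ∨ IsZero (E.obj S))
    (H : B ⥤ BH) [H.Additive] [PreservesFiniteLimits H] [PreservesFiniteColimits H]
    (hker : ∀ (M : B) (N : B), IsZero (H.obj M) → StdFilt ΔB N →
      ∀ f : M ⟶ N, f = 0)
    (hHE : ∀ S : ShortComplex A, S.ShortExact →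
      StdFilt ΔA S.X₁ → StdFilt ΔA S.X₂ → StdFilt ΔA S.X₃ →
      (S.map (E ⋙ H)).ShortExact) :
    (∀ X : A, StdFilt ΔA X → StdFilt ΔB (E.obj X)) ∧
    (∀ S : ShortComplex A, S.ShortExact →
      StdFilt ΔA S.X₁ → StdFilt ΔA S.X₂ → StdFilt ΔA S.X₃ →
      (S.map E).ShortExact) :=
  stmt_19_general ΔA ΔB E hEΔ H hker hHE
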